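/- arXiv:1402.3138 — 2 statements merged into one kernel-verified Lean document; each statement's English description precedes it below -/
import Mathlib

section
/- The choice share map B ↦ π_j^w(B) in the brand ambassador problem is submodular: for all X ⊆ Y ⊆ A and a ∈ A \ Y, π_j^w(X∪{a}) - π_j^w(X) ≥ π_j^w(Y∪{a}) - π_j^w(Y). -/
open Matrix

/-- `P(B)`: the rows of `P` indexed by the brand-ambassador set `B` are zeroed. -/
def ambP {n : ℕ} (P : Matrix (Fin n) (Fin n) ℝ) (B : Finset (Fin n)) :
    Matrix (Fin n) (Fin n) ℝ :=
  fun i k => if i ∈ B then 0 else P i k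

/-- `q⁽ʲ⁾(B)`: entries indexed by `B` are set to 1 (ambassadors pick `j` surely). -/
def ambQ {n m : ℕ} (q : Fin n → Fin m → ℝ) (j : Fin m) (B : Finset (Fin n)) :
    Fin n → ℝ :=
  fun k => if k ∈ B then 1 else q k j

/-- Choice share of `j` under endowment `w` with ambassador set `B`. -/
noncomputable def ambShare {n m : ℕ} (w : Fin n → ℝ) (P : Matrix (Fin n) (Fin n) ℝ)
    (q : Fin n → Fin m → ℝ) (j : Fin m) (B : Finset (Fin n)) : ℝ :=
  w ⬝ᵥ ((1 - ambP P B)⁻¹ *ᵥ ambQ q j B)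

/-!
Write `N(B) = (1 - P(B))⁻¹ = ∑ₖ P(B)ᵏ` (the Neumann series converges by Gelfand's formula) and
`x(B) = N(B) q⁽ʲ⁾(B)` for the vector of single-agent shares `π_j^{e_i}(B)`. A vector `u` equals
`N(B) c` iff `u = c` on `B` and `u = P u + c` off `B`; since `N(B) ≥ 0`, this linear
characterisation yields `0 ≤ x(B) ≤ 1`, monotonicity of `x` in `B`, and the marginal gain
`x(B ∪ {a}) - x(B) = N(B ∪ {a})_{·a} (1 - x_a(B))`. Both factors are nonnegative and antitone in
`B` (the entries of `P(B)`, hence of `N(B)`, shrink as `B` grows), so pairing with `w ≥ 0` gives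
submodularity.
-/

open Filter

theorem summable_norm_pow_of_spectralRadius_lt_one {A : Type*} [NormedRing A]
    [NormedAlgebra ℂ A] [CompleteSpace A] {a : A} (ha : spectralRadius ℂ a < 1) :
    Summable fun k : ℕ => ‖a ^ k‖ := by
  obtain ⟨r, hρr, hr1⟩ := ENNReal.lt_iff_exists_nnreal_btwn.1 ha
  have hgelfand := spectrum.pow_nnnorm_pow_one_div_tendsto_nhds_spectralRadius a
  have hbound : ∀ᶠ k : ℕ in atTop, ‖a ^ k‖ ≤ (r : ℝ) ^ k := by
    filter_upwards [hgelfand.eventually_lt_const hρr, eventually_gt_atTop 0] with k hk hk0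
    rw [one_div, ENNReal.rpow_inv_lt_iff (by positivity), ENNReal.rpow_natCast] at hk
    exact_mod_cast hk.le
  refine .of_norm_bounded_eventually_nat (summable_geometric_of_lt_one r.2 ?_) ?_
  · exact_mod_cast hr1
  · simpa using hbound

namespace Matrix

section Neumann

variable {ι R : Type*} [Fintype ι] [DecidableEq ι] [CommRing R] [TopologicalSpace R]
  [IsTopologicalRing R] [T2Space R] {A : Matrix ι ι R}

theorem inv_one_sub_eq_tsum_pow (h : Summable (A ^ ·)) : (1 - A)⁻¹ = ∑' k, A ^ k :=
  inv_eq_right_inv h.one_sub_mul_tsum_pow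

theorem inv_one_sub_apply_eq_tsum (h : Summable (A ^ ·)) (i l : ι) :
    (1 - A)⁻¹ i l = ∑' k, (A ^ k) i l := by
  rw [inv_one_sub_eq_tsum_pow h]
  exact (congrFun (tsum_apply h) l).trans (tsum_apply (Pi.summable.1 h i))

theorem eq_inv_one_sub_mulVec_iff (h : Summable (A ^ ·)) {u c : ι → R} :
    u = (1 - A)⁻¹ *ᵥ c ↔ u = A *ᵥ u + c := by
  rw [← sub_eq_iff_eq_add', show u - A *ᵥ u = (1 - A) *ᵥ u by rw [sub_mulVec, one_mulVec]]
  constructor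
  · rintro rfl
    rw [mulVec_mulVec, inv_one_sub_eq_tsum_pow h, h.one_sub_mul_tsum_pow, one_mulVec]
  · rintro rfl
    rw [mulVec_mulVec, inv_one_sub_eq_tsum_pow h, h.tsum_pow_mul_one_sub, one_mulVec]

end Neumann

section Nonneg

variable {ι : Type*} [Fintype ι] [DecidableEq ι] {A P : Matrix ι ι ℝ}

theorem pow_apply_le_pow_apply (hA : ∀ i l, 0 ≤ A i l) (hAP : ∀ i l, A i l ≤ P i l) (k : ℕ)
    (i l : ι) : (A ^ k) i l ≤ (P ^ k) i l := by
  induction k generalizing l with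
  | zero => rfl
  | succ k ih =>
    rw [pow_succ, pow_succ, mul_apply, mul_apply]
    exact Finset.sum_le_sum fun t _ =>
      mul_le_mul (ih t) (hAP t l) (hA t l) ((pow_apply_nonneg hA k i t).trans (ih t))

theorem summable_pow_of_le (hA : ∀ i l, 0 ≤ A i l) (hAP : ∀ i l, A i l ≤ P i l)
    (hP : Summable (P ^ ·)) : Summable (A ^ ·) :=
  Pi.summable.2 fun i => Pi.summable.2 fun l =>
    (Pi.summable.1 (Pi.summable.1 hP i) l).of_nonneg_of_le (fun k => pow_apply_nonneg hA k i l)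
      fun k => pow_apply_le_pow_apply hA hAP k i l

theorem inv_one_sub_apply_nonneg (hA : ∀ i l, 0 ≤ A i l) (h : Summable (A ^ ·)) (i l : ι) :
    0 ≤ (1 - A)⁻¹ i l := by
  rw [inv_one_sub_apply_eq_tsum h]
  exact tsum_nonneg fun k => pow_apply_nonneg hA k i l

theorem inv_one_sub_mulVec_apply_nonneg (hA : ∀ i l, 0 ≤ A i l) (h : Summable (A ^ ·))
    {c : ι → ℝ} (hc : ∀ k, 0 ≤ c k) (i : ι) : 0 ≤ ((1 - A)⁻¹ *ᵥ c) i :=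
  dotProduct_nonneg_of_nonneg (fun t => inv_one_sub_apply_nonneg hA h i t) hc

theorem inv_one_sub_apply_le_of_le (hA : ∀ i l, 0 ≤ A i l) (hAP : ∀ i l, A i l ≤ P i l)
    (hP : Summable (P ^ ·)) (i l : ι) : (1 - A)⁻¹ i l ≤ (1 - P)⁻¹ i l := by
  have hsumA := summable_pow_of_le hA hAP hP
  rw [inv_one_sub_apply_eq_tsum hsumA, inv_one_sub_apply_eq_tsum hP]
  exact (Pi.summable.1 (Pi.summable.1 hsumA i) l).tsum_le_tsum
    (fun k => pow_apply_le_pow_apply hA hAP k i l) (Pi.summable.1 (Pi.summable.1 hP i) l)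

end Nonneg

section Spectral

variable {ι : Type*} [Fintype ι] [DecidableEq ι]

theorem summable_pow_of_spectrum_lt_one {P : Matrix ι ι ℝ}
    (hspec : ∀ μ ∈ spectrum ℂ (P.map (algebraMap ℝ ℂ)), ‖μ‖ < 1) : Summable (P ^ ·) := by
  rcases isEmpty_or_nonempty ι with _ | _
  · exact (funext fun _ => Subsingleton.elim _ _ : (P ^ ·) = 0) ▸ summable_zero
  let := Matrix.linftyOpNormedRing (n := ι) (α := ℂ)
  let := Matrix.linftyOpNormedAlgebra (n := ι) (R := ℂ) (α := ℂ)
  have hρ : spectralRadius ℂ (P.map (algebraMap ℝ ℂ)) < 1 := by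
    exact_mod_cast spectrum.spectralRadius_lt_of_forall_lt _ fun μ hμ => by
      exact_mod_cast hspec μ hμ
  have hC := (summable_norm_pow_of_spectralRadius_lt_one hρ).of_norm
  convert hC.map Complex.reAddGroupHom.mapMatrix (continuous_id.matrix_map Complex.continuous_re)
    using 1
  funext k
  rw [Function.comp_apply, ← Matrix.map_pow]
  ext i l
  simp

end Spectral

end Matrix

section Ambassador

variable {n m : ℕ} {P : Matrix (Fin n) (Fin n) ℝ}

theorem ambP_nonneg (hP : ∀ i k, 0 ≤ P i k) (B : Finset (Fin n)) (i k : Fin n) :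
    0 ≤ ambP P B i k := by
  by_cases hi : i ∈ B <;> simp [ambP, hi, hP i k]

theorem ambP_antitone (hP : ∀ i k, 0 ≤ P i k) {X Y : Finset (Fin n)} (hXY : X ⊆ Y)
    (i k : Fin n) : ambP P Y i k ≤ ambP P X i k := by
  by_cases hX : i ∈ X
  · simp [ambP, hX, hXY hX]
  · by_cases hY : i ∈ Y <;> simp [ambP, hX, hY, hP i k]

theorem ambP_le (hP : ∀ i k, 0 ≤ P i k) (B : Finset (Fin n)) (i k : Fin n) :
    ambP P B i k ≤ P i k := by
  simpa [ambP] using ambP_antitone hP (Finset.empty_subset B) i k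

theorem ambP_mulVec_apply (B : Finset (Fin n)) (v : Fin n → ℝ) (k : Fin n) :
    (ambP P B *ᵥ v) k = if k ∈ B then 0 else (P *ᵥ v) k := by
  by_cases hk : k ∈ B <;> simp [mulVec, dotProduct, ambP, hk]

theorem summable_pow_ambP (hP : ∀ i k, 0 ≤ P i k) (hsum : Summable (P ^ ·))
    (B : Finset (Fin n)) : Summable (ambP P B ^ ·) :=
  summable_pow_of_le (ambP_nonneg hP B) (ambP_le hP B) hsum

theorem eq_inv_one_sub_ambP_mulVec_iff (hP : ∀ i k, 0 ≤ P i k) (hsum : Summable (P ^ ·))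
    {B : Finset (Fin n)} {u c : Fin n → ℝ} :
    u = (1 - ambP P B)⁻¹ *ᵥ c ↔ ∀ k, u k = if k ∈ B then c k else (P *ᵥ u) k + c k := by
  rw [eq_inv_one_sub_mulVec_iff (summable_pow_ambP hP hsum B), funext_iff]
  refine forall_congr' fun k => ?_
  by_cases hk : k ∈ B <;> simp [ambP_mulVec_apply, hk]

noncomputable def ambShareVec (P : Matrix (Fin n) (Fin n) ℝ) (q : Fin n → Fin m → ℝ)
    (j : Fin m) (B : Finset (Fin n)) : Fin n → ℝ :=
  (1 - ambP P B)⁻¹ *ᵥ ambQ q j B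

variable {q : Fin n → Fin m → ℝ} {j : Fin m}

theorem ambShareVec_apply (hP : ∀ i k, 0 ≤ P i k) (hsum : Summable (P ^ ·))
    (B : Finset (Fin n)) (k : Fin n) :
    ambShareVec P q j B k = if k ∈ B then 1 else (P *ᵥ ambShareVec P q j B) k + q k j := by
  have := (eq_inv_one_sub_ambP_mulVec_iff hP hsum).1 (rfl : ambShareVec P q j B = _) k
  by_cases hk : k ∈ B <;> simpa [ambQ, hk] using this

theorem ambShareVec_le_one (hP : ∀ i k, 0 ≤ P i k) (hsum : Summable (P ^ ·))
    (hq : ∀ i l, 0 ≤ q i l) (hrow : ∀ i, (∑ k, P i k) + (∑ l, q i l) = 1)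
    (B : Finset (Fin n)) (i : Fin n) : ambShareVec P q j B i ≤ 1 := by
  set c : Fin n → ℝ := fun k => if k ∈ B then 0 else (∑ l, q k l) - q k j
  have hc : ∀ k, 0 ≤ c k := by
    intro k
    by_cases hk : k ∈ B
    · simp [c, hk]
    · simpa [c, hk] using Finset.single_le_sum (fun l _ => hq k l) (Finset.mem_univ j)
  have hgap : 1 - ambShareVec P q j B = (1 - ambP P B)⁻¹ *ᵥ c := by
    refine (eq_inv_one_sub_ambP_mulVec_iff hP hsum).2 fun k => ?_
    have hk' := ambShareVec_apply (q := q) (j := j) hP hsum B k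
    by_cases hk : k ∈ B
    · simp_all [c]
    · have hrowk := hrow k
      have hP1 : (P *ᵥ 1) k = ∑ t, P k t := by simp [mulVec, dotProduct]
      simp only [hk, if_false] at hk' ⊢
      simp only [c, hk, if_false, Pi.sub_apply, mulVec_sub, Pi.one_apply, hP1]
      linarith
  have := inv_one_sub_mulVec_apply_nonneg (ambP_nonneg hP B) (summable_pow_ambP hP hsum B) hc i
  rw [← hgap, Pi.sub_apply, Pi.one_apply, sub_nonneg] at this
  exact this

theorem ambShareVec_sub_eq (hP : ∀ i k, 0 ≤ P i k) (hsum : Summable (P ^ ·))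
    {X Y : Finset (Fin n)} (hXY : X ⊆ Y) :
    ambShareVec P q j Y - ambShareVec P q j X
      = (1 - ambP P Y)⁻¹ *ᵥ fun k => if k ∈ Y then 1 - ambShareVec P q j X k else 0 := by
  refine (eq_inv_one_sub_ambP_mulVec_iff hP hsum).2 fun k => ?_
  have hY := ambShareVec_apply (q := q) (j := j) hP hsum Y k
  have hX := ambShareVec_apply (q := q) (j := j) hP hsum X k
  by_cases hk : k ∈ Y
  · simp_all
  · have hkX : k ∉ X := fun h => hk (hXY h)
    simp only [hk, hkX, if_false] at hX hY ⊢
    rw [Pi.sub_apply, mulVec_sub, Pi.sub_apply, hX, hY]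
    ring

theorem ambShareVec_mono (hP : ∀ i k, 0 ≤ P i k) (hsum : Summable (P ^ ·))
    (hq : ∀ i l, 0 ≤ q i l) (hrow : ∀ i, (∑ k, P i k) + (∑ l, q i l) = 1)
    {X Y : Finset (Fin n)} (hXY : X ⊆ Y) (i : Fin n) :
    ambShareVec P q j X i ≤ ambShareVec P q j Y i := by
  have hc : ∀ k, 0 ≤ if k ∈ Y then 1 - ambShareVec P q j X k else 0 := fun k => by
    by_cases hk : k ∈ Y
    · simpa [hk] using ambShareVec_le_one hP hsum hq hrow X k
    · simp [hk]
  have := inv_one_sub_mulVec_apply_nonneg (ambP_nonneg hP Y) (summable_pow_ambP hP hsum Y) hc i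
  rw [← ambShareVec_sub_eq hP hsum hXY, Pi.sub_apply, sub_nonneg] at this
  exact this

theorem ambShareVec_insert_sub_apply (hP : ∀ i k, 0 ≤ P i k) (hsum : Summable (P ^ ·))
    {B : Finset (Fin n)} {a : Fin n} (ha : a ∉ B) (i : Fin n) :
    ambShareVec P q j (insert a B) i - ambShareVec P q j B i
      = (1 - ambP P (insert a B))⁻¹ i a * (1 - ambShareVec P q j B a) := by
  have hgap : (fun k => if k ∈ insert a B then 1 - ambShareVec P q j B k else 0)
      = Pi.single a (1 - ambShareVec P q j B a) := by
    funext k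
    by_cases hka : k = a
    · subst hka; simp
    · by_cases hkB : k ∈ B
      · simp [hka, hkB, ambShareVec_apply (q := q) (j := j) hP hsum B k]
      · simp [hka, hkB]
  rw [← Pi.sub_apply, ambShareVec_sub_eq hP hsum (Finset.subset_insert a B), hgap,
    mulVec_single]
  simp [mul_comm]

theorem ambShare_eq_dotProduct (w : Fin n → ℝ) (B : Finset (Fin n)) :
    ambShare w P q j B = w ⬝ᵥ ambShareVec P q j B := rfl

end Ambassador

theorem ambassador_share_submodular_general {n m : ℕ}
    (P : Matrix (Fin n) (Fin n) ℝ) (q : Fin n → Fin m → ℝ) (j : Fin m)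
    (w : Fin n → ℝ)
    (hP : ∀ i k, 0 ≤ P i k)
    (hq : ∀ i l, 0 ≤ q i l)
    (hrow : ∀ i, (∑ k, P i k) + (∑ l, q i l) = 1)
    (hspec : ∀ μ ∈ spectrum ℂ (P.map (algebraMap ℝ ℂ)), ‖μ‖ < 1)
    (hw : ∀ i, 0 ≤ w i)
    (X Y : Finset (Fin n)) (hXY : X ⊆ Y) (a : Fin n) (ha : a ∉ Y) :
    ambShare w P q j (insert a Y) - ambShare w P q j Y ≤
      ambShare w P q j (insert a X) - ambShare w P q j X := by
  have hsum := summable_pow_of_spectrum_lt_one hspec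
  have haX : a ∉ X := fun h => ha (hXY h)
  simp only [ambShare_eq_dotProduct, ← dotProduct_sub]
  refine dotProduct_le_dotProduct_of_nonneg_left (fun i => ?_) hw
  simp only [Pi.sub_apply, ambShareVec_insert_sub_apply hP hsum ha,
    ambShareVec_insert_sub_apply hP hsum haX]
  have hgain_anti : (1 - ambP P (insert a Y))⁻¹ i a ≤ (1 - ambP P (insert a X))⁻¹ i a :=
    inv_one_sub_apply_le_of_le (ambP_nonneg hP _)
      (ambP_antitone hP (Finset.insert_subset_insert a hXY)) (summable_pow_ambP hP hsum _) i a
  have hslack_anti : 1 - ambShareVec P q j Y a ≤ 1 - ambShareVec P q j X a :=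
    sub_le_sub_left (ambShareVec_mono hP hsum hq hrow hXY a) 1
  exact mul_le_mul hgain_anti hslack_anti (sub_nonneg.2 (ambShareVec_le_one hP hsum hq hrow Y a))
    (inv_one_sub_apply_nonneg (ambP_nonneg hP _) (summable_pow_ambP hP hsum _) i a)

/-- The choice share `B ↦ π_j^w(B)` of the brand ambassador
problem is submodular: for `X ⊆ Y` and `a ∉ Y`,
`π_j^w(X∪{a}) - π_j^w(X) ≥ π_j^w(Y∪{a}) - π_j^w(Y)`. -/
theorem ambassador_share_submodular {n m : ℕ}
    (P : Matrix (Fin n) (Fin n) ℝ) (q : Fin n → Fin m → ℝ) (j : Fin m)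
    (w : Fin n → ℝ)
    (hP : ∀ i k, 0 ≤ P i k) (hdiag : ∀ i, P i i = 0)
    (hq : ∀ i l, 0 ≤ q i l)
    (hrow : ∀ i, (∑ k, P i k) + (∑ l, q i l) = 1)
    (hspec : ∀ μ ∈ spectrum ℂ (P.map (algebraMap ℝ ℂ)), ‖μ‖ < 1)
    (hw : ∀ i, 0 ≤ w i)
    (X Y : Finset (Fin n)) (hXY : X ⊆ Y) (a : Fin n) (ha : a ∉ Y) :
    ambShare w P q j (insert a Y) - ambShare w P q j Y ≤
      ambShare w P q j (insert a X) - ambShare w P q j X :=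
  ambassador_share_submodular_general P q j w hP hq hrow hspec hw X Y hXY a ha
end

section
/- Concavity of choice share in a parameter: under the assumptions of the monotonicity lemma, if additionally q_{ij}(·) is concave and p_{ik}(·) (all k) and q_{il}(·) (all l ≠ j) are convex (all twice differentiable), then u ↦ π_j^w(u) is concave on T and, for l ≠ j, u ↦ π_l^w(u) is convex on T. -/
/-!
For `l ≠ j`, `π_l^w(u)` is the limit of `w ⬝ (∑_{k<N} P(u)^k) q_l(u)`, a polynomial with
nonnegative coefficients in the entries of `P(u)` and `q_l(u)`. Nonnegative antitone convex
functions form a subsemiring (two antitone functions monovary, so their product stays convex),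
hence every partial sum is convex, and so is the limit. The Neumann series converges because
Gelfand's formula turns `ρ(P(u)) < 1` into geometric decay of `‖P(u)^k‖`. Since the rows of
`(P, q)` sum to one, `∑_l π_l^w = ∑_i w_i`, so `π_j^w` is a constant minus a sum of convex
functions.
-/

open Matrix Filter Topology Finset

theorem tendsto_pow_atTop_nhds_zero_of_spectralRadius_lt_one {A : Type*} [NormedRing A]
    [NormedAlgebra ℂ A] [CompleteSpace A] {a : A} (ha : spectralRadius ℂ a < 1) :
    Tendsto (a ^ ·) atTop (𝓝 0) := by
  obtain ⟨r, hr0, hρr, hr1⟩ := ENNReal.lt_iff_exists_real_btwn.1 ha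
  have hbound : ∀ᶠ n in atTop, ‖a ^ n‖ ≤ r ^ n := by
    filter_upwards [(spectrum.pow_norm_pow_one_div_tendsto_nhds_spectralRadius
      a).eventually_lt_const hρr, eventually_ne_atTop 0] with n hn hn0
    have hroot : ‖a ^ n‖ ^ ((n : ℝ)⁻¹) ≤ r := by
      simpa [one_div] using (ENNReal.ofReal_lt_ofReal_iff'.1 hn).1.le
    calc ‖a ^ n‖ = (‖a ^ n‖ ^ ((n : ℝ)⁻¹)) ^ n :=
          (Real.rpow_inv_natCast_pow (norm_nonneg _) hn0).symm
      _ ≤ r ^ n := pow_le_pow_left₀ (by positivity) hroot n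
  exact squeeze_zero_norm' hbound
    (tendsto_pow_atTop_nhds_zero_of_lt_one hr0 (by simpa using hr1))

theorem tendsto_pow_atTop_nhds_zero_of_forall_spectrum_norm_lt_one {A : Type*} [NormedRing A]
    [NormedAlgebra ℂ A] [CompleteSpace A] {a : A} (ha : ∀ μ ∈ spectrum ℂ a, ‖μ‖ < 1) :
    Tendsto (a ^ ·) atTop (𝓝 0) := by
  rcases subsingleton_or_nontrivial A with hA | hA
  · simpa only [Subsingleton.elim _ (0 : A)] using tendsto_const_nhds
  · exact tendsto_pow_atTop_nhds_zero_of_spectralRadius_lt_one <| by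
      simpa using spectrum.spectralRadius_lt_of_forall_lt a (r := 1) fun μ hμ => by
        simpa [← NNReal.coe_lt_coe] using ha μ hμ

theorem tendsto_geom_sum_of_tendsto_pow {R : Type*} [Ring R] [TopologicalSpace R]
    [IsTopologicalRing R] {a b : R} (ha : Tendsto (a ^ ·) atTop (𝓝 0)) (hb : (1 - a) * b = 1) :
    Tendsto (fun n => ∑ i ∈ range n, a ^ i) atTop (𝓝 b) := by
  have hsum : ∀ n, ∑ i ∈ range n, a ^ i = (1 - a ^ n) * b := fun n => by
    rw [← geom_sum_mul_neg, mul_assoc, hb, mul_one]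
  simpa [hsum] using (ha.const_sub 1).mul_const b

namespace Matrix

variable {ι : Type*} [Fintype ι]

theorem isUnit_det_one_sub_of_forall_spectrum_norm_lt_one [DecidableEq ι] {P : Matrix ι ι ℝ}
    (hP : ∀ μ ∈ spectrum ℂ (P.map (algebraMap ℝ ℂ)), ‖μ‖ < 1) : IsUnit (1 - P).det := by
  have hunit := spectrum.notMem_iff.1 fun h => by simpa using hP 1 h
  rw [map_one, show (1 : Matrix ι ι ℂ) - P.map (algebraMap ℝ ℂ)
      = (algebraMap ℝ ℂ).mapMatrix (1 - P) by simp [map_sub], isUnit_iff_isUnit_det,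
    ← RingHom.map_det, isUnit_map_iff] at hunit
  exact hunit

theorem tendsto_pow_of_forall_spectrum_norm_lt_one [DecidableEq ι] {P : Matrix ι ι ℝ}
    (hP : ∀ μ ∈ spectrum ℂ (P.map (algebraMap ℝ ℂ)), ‖μ‖ < 1) :
    Tendsto (P ^ ·) atTop (𝓝 0) := by
  -- Any algebra norm will do: the `ℓ∞` operator norm induces the product topology.
  let := Matrix.linftyOpNormedRing (n := ι) (α := ℂ)
  let := Matrix.linftyOpNormedAlgebra (n := ι) (R := ℂ) (α := ℂ)
  have := FiniteDimensional.complete ℂ (Matrix ι ι ℂ)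
  have hre := ((continuous_id.matrix_map Complex.continuous_re).tendsto 0).comp
    (tendsto_pow_atTop_nhds_zero_of_forall_spectrum_norm_lt_one hP)
  have hpow : ∀ k, ((P.map Complex.ofReal) ^ k).map Complex.re = P ^ k := fun k => by
    rw [show P.map Complex.ofReal = P.map Complex.ofRealHom from rfl, ← Matrix.map_pow,
      Matrix.map_map]
    ext i i'
    simp
  simpa [Function.comp_def, hpow] using hre

theorem tendsto_geom_sum_of_forall_spectrum_norm_lt_one [DecidableEq ι] {P : Matrix ι ι ℝ}
    (hP : ∀ μ ∈ spectrum ℂ (P.map (algebraMap ℝ ℂ)), ‖μ‖ < 1) :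
    Tendsto (fun N => ∑ k ∈ range N, P ^ k) atTop (𝓝 (1 - P)⁻¹) :=
  tendsto_geom_sum_of_tendsto_pow (tendsto_pow_of_forall_spectrum_norm_lt_one hP)
    (mul_nonsing_inv _ (isUnit_det_one_sub_of_forall_spectrum_norm_lt_one hP))

theorem sum_dotProduct_inv_one_sub_mulVec [DecidableEq ι] {κ R : Type*} [Fintype κ] [CommRing R]
    {P : Matrix ι ι R} {q : ι → κ → R} (hP : IsUnit (1 - P).det)
    (hrow : ∀ i, ∑ k, P i k + ∑ l, q i l = 1) (w : ι → R) :
    ∑ l, w ⬝ᵥ ((1 - P)⁻¹ *ᵥ fun i => q i l) = ∑ i, w i := by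
  have hq : ∑ l, (fun i => q i l) = (1 - P) *ᵥ 1 := by
    ext i
    simp only [Finset.sum_apply, mulVec, dotProduct, sub_apply, one_apply, Pi.one_apply, mul_one,
      sum_sub_distrib, sum_ite_eq, mem_univ, ↓reduceIte]
    linear_combination hrow i
  rw [← dotProduct_sum, ← mulVec_sum, hq, mulVec_mulVec, nonsing_inv_mul _ hP, one_mulVec]
  simp [dotProduct]

section Subsemiring

variable {X R : Type*} [CommSemiring R] {S : Subsemiring (X → R)}

theorem pow_apply_mem_of_forall_apply_mem [DecidableEq ι] {M : X → Matrix ι ι R}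
    (hM : ∀ i k, (fun u => M u i k) ∈ S) (n : ℕ) (i k : ι) : (fun u => (M u ^ n) i k) ∈ S := by
  induction n generalizing k with
  | zero =>
    simp only [pow_zero, one_apply]
    split_ifs
    exacts [S.one_mem, S.zero_mem]
  | succ n ih =>
    simp only [pow_succ, mul_apply]
    rw [show (fun u => ∑ j, (M u ^ n) i j * M u j k)
        = ∑ j, (fun u => (M u ^ n) i j) * fun u => M u j k by ext; simp]
    exact S.sum_mem fun j _ => S.mul_mem (ih j) (hM j k)

theorem geom_sum_apply_mem_of_forall_apply_mem [DecidableEq ι] {M : X → Matrix ι ι R}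
    (hM : ∀ i k, (fun u => M u i k) ∈ S) (N : ℕ) (i k : ι) :
    (fun u => (∑ n ∈ range N, M u ^ n) i k) ∈ S := by
  simp only [sum_apply]
  rw [← Finset.sum_fn]
  exact S.sum_mem fun n _ => pow_apply_mem_of_forall_apply_mem hM n i k

theorem dotProduct_mulVec_mem {w : ι → R} (hw : ∀ i, Function.const X (w i) ∈ S)
    {M : X → Matrix ι ι R} (hM : ∀ i k, (fun u => M u i k) ∈ S) {v : X → ι → R}
    (hv : ∀ i, (fun u => v u i) ∈ S) : (fun u => w ⬝ᵥ (M u *ᵥ v u)) ∈ S := by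
  rw [show (fun u => w ⬝ᵥ (M u *ᵥ v u))
      = ∑ i, ∑ k, Function.const X (w i) * ((fun u => M u i k) * fun u => v u k) by
    ext u; simp [dotProduct, mulVec, Finset.mul_sum]]
  exact S.sum_mem fun i _ => S.sum_mem fun k _ => S.mul_mem (hw i) (S.mul_mem (hM i k) (hv k))

end Subsemiring

end Matrix

section NonnegAntitoneConvex

variable {E : Type*} [AddCommGroup E] [Module ℝ E] [LinearOrder E] {s : Set E}

def nonnegAntitoneConvexOn (hs : Convex ℝ s) : Subsemiring (E → ℝ) where
  carrier := {f | (∀ x ∈ s, 0 ≤ f x) ∧ AntitoneOn f s ∧ ConvexOn ℝ s f}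
  zero_mem' := ⟨fun _ _ => le_rfl, antitoneOn_const, convexOn_const 0 hs⟩
  one_mem' := ⟨fun _ _ => zero_le_one, antitoneOn_const, convexOn_const 1 hs⟩
  add_mem' := fun ⟨hf₀, hfa, hfc⟩ ⟨hg₀, hga, hgc⟩ =>
    ⟨fun x hx => add_nonneg (hf₀ x hx) (hg₀ x hx), hfa.add hga, hfc.add hgc⟩
  mul_mem' := fun ⟨hf₀, hfa, hfc⟩ ⟨hg₀, hga, hgc⟩ =>
    ⟨fun x hx => mul_nonneg (hf₀ x hx) (hg₀ x hx),
      fun x hx y hy hxy => mul_le_mul (hfa hx hy hxy) (hga hx hy hxy) (hg₀ y hy) (hf₀ x hx),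
      hfc.mul hgc hf₀ hg₀ (hfa.monovaryOn hga)⟩

theorem mem_nonnegAntitoneConvexOn (hs : Convex ℝ s) {f : E → ℝ} :
    f ∈ nonnegAntitoneConvexOn hs ↔ (∀ x ∈ s, 0 ≤ f x) ∧ AntitoneOn f s ∧ ConvexOn ℝ s f :=
  Iff.rfl

theorem const_mem_nonnegAntitoneConvexOn (hs : Convex ℝ s) {c : ℝ} (hc : 0 ≤ c) :
    Function.const E c ∈ nonnegAntitoneConvexOn hs :=
  (mem_nonnegAntitoneConvexOn hs).2 ⟨fun _ _ => hc, antitoneOn_const, convexOn_const c hs⟩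

end NonnegAntitoneConvex

theorem ConvexOn.of_tendsto {ι E : Type*} [AddCommGroup E] [Module ℝ E] {s : Set E}
    {l : Filter ι} [l.NeBot] {F : ι → E → ℝ} {f : E → ℝ} (hF : ∀ n, ConvexOn ℝ s (F n))
    (hlim : ∀ x ∈ s, Tendsto (F · x) l (𝓝 (f x))) : ConvexOn ℝ s f := by
  classical
  -- `F n` need not converge off `s`, so replace it there by `f`.
  have hpiece : Tendsto (fun n => s.piecewise (F n) f) l (𝓝 f) := by
    refine tendsto_pi_nhds.2 fun x => ?_
    by_cases hx : x ∈ s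
    · simpa [hx] using hlim x hx
    · simp [hx]
  exact isClosed_setOfPred_convexOn.mem_of_tendsto hpiece
    (Eventually.of_forall fun n => (hF n).congr (s.piecewise_eqOn _ _).symm)

theorem convexOn_dotProduct_inv_one_sub_mulVec {ι E : Type*} [Fintype ι] [DecidableEq ι]
    [AddCommGroup E] [Module ℝ E] [LinearOrder E] {T : Set E} (hT : Convex ℝ T)
    {P : E → Matrix ι ι ℝ} {v : E → ι → ℝ} {w : ι → ℝ} (hw : ∀ i, 0 ≤ w i)
    (hspec : ∀ u ∈ T, ∀ μ ∈ spectrum ℂ ((P u).map (algebraMap ℝ ℂ)), ‖μ‖ < 1)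
    (hP : ∀ i k, (fun u => P u i k) ∈ nonnegAntitoneConvexOn hT)
    (hv : ∀ i, (fun u => v u i) ∈ nonnegAntitoneConvexOn hT) :
    ConvexOn ℝ T fun u => w ⬝ᵥ ((1 - P u)⁻¹ *ᵥ v u) := by
  have hpartial : ∀ N, ConvexOn ℝ T fun u => w ⬝ᵥ ((∑ k ∈ range N, P u ^ k) *ᵥ v u) := fun N =>
    ((mem_nonnegAntitoneConvexOn hT).1 <| dotProduct_mulVec_mem
      (fun i => const_mem_nonnegAntitoneConvexOn hT (hw i))
      (geom_sum_apply_mem_of_forall_apply_mem hP N) hv).2.2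
  refine ConvexOn.of_tendsto (l := atTop) hpartial fun u hu => ?_
  have hcont : Continuous fun M : Matrix ι ι ℝ => w ⬝ᵥ (M *ᵥ v u) :=
    continuous_const.dotProduct (continuous_id.matrix_mulVec continuous_const)
  exact (hcont.tendsto _).comp (tendsto_geom_sum_of_forall_spectrum_norm_lt_one (hspec u hu))

theorem choice_share_concave_in_parameter_general {n m : ℕ}
    (P : ℝ → Matrix (Fin n) (Fin n) ℝ) (q : ℝ → Fin n → Fin m → ℝ)
    (j : Fin m) (w : Fin n → ℝ) (hw : ∀ i, 0 ≤ w i)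
    (T : Set ℝ) (hT : Convex ℝ T)
    (hPnonneg : ∀ u ∈ T, ∀ i k, 0 ≤ P u i k)
    (hqnonneg : ∀ u ∈ T, ∀ i l, 0 ≤ q u i l)
    (hrow : ∀ u ∈ T, ∀ i, (∑ k, P u i k) + (∑ l, q u i l) = 1)
    (hspec : ∀ u ∈ T, ∀ μ ∈ spectrum ℂ ((P u).map (algebraMap ℝ ℂ)), ‖μ‖ < 1)
    (hp_anti : ∀ i k, AntitoneOn (fun u => P u i k) T)
    (hp_cvx : ∀ i k, ConvexOn ℝ T (fun u => P u i k))
    (hql_anti : ∀ i, ∀ l ≠ j, AntitoneOn (fun u => q u i l) T)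
    (hql_cvx : ∀ i, ∀ l ≠ j, ConvexOn ℝ T (fun u => q u i l)) :
    ConcaveOn ℝ T (fun u => w ⬝ᵥ ((1 - P u)⁻¹ *ᵥ fun i => q u i j)) ∧
      ∀ l ≠ j, ConvexOn ℝ T (fun u => w ⬝ᵥ ((1 - P u)⁻¹ *ᵥ fun i => q u i l)) := by
  have hconvex : ∀ l ≠ j, ConvexOn ℝ T fun u => w ⬝ᵥ ((1 - P u)⁻¹ *ᵥ fun i => q u i l) :=
    fun l hl => convexOn_dotProduct_inv_one_sub_mulVec hT hw hspec
      (fun i k => ⟨fun u hu => hPnonneg u hu i k, hp_anti i k, hp_cvx i k⟩)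
      fun i => ⟨fun u hu => hqnonneg u hu i l, hql_anti i l hl, hql_cvx i l hl⟩
  have hshare_j : Set.EqOn
      (fun u => ∑ i, w i - ∑ l ∈ univ.erase j, w ⬝ᵥ ((1 - P u)⁻¹ *ᵥ fun i => q u i l))
      (fun u => w ⬝ᵥ ((1 - P u)⁻¹ *ᵥ fun i => q u i j)) T := by
    intro u hu
    dsimp only
    rw [← sum_dotProduct_inv_one_sub_mulVec
      (isUnit_det_one_sub_of_forall_spectrum_norm_lt_one (hspec u hu)) (hrow u hu) w,
      ← add_sum_erase _ _ (mem_univ j), add_sub_cancel_right]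
  have hrest :
      ConvexOn ℝ T fun u => ∑ l ∈ univ.erase j, w ⬝ᵥ ((1 - P u)⁻¹ *ᵥ fun i => q u i l) := by
    simpa only [← Finset.sum_fn] using sum_induction _ (ConvexOn ℝ T)
      (fun _ _ => ConvexOn.add) (convexOn_const 0 hT) fun l hl => hconvex l (ne_of_mem_erase hl)
  exact ⟨((concaveOn_const _ hT).sub hrest).congr hshare_j, hconvex⟩

/-- Concavity of choice share in a parameter: under the
assumptions of the monotonicity lemma, if in addition `q · i j` is concave and
the `p · i k` and `q · i l` (`l ≠ j`) are convex (all twice differentiable),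
then `u ↦ π_j^w(u)` is concave on `T` and, for `l ≠ j`, `u ↦ π_l^w(u)` is
convex on `T`. -/
theorem choice_share_concave_in_parameter {n m : ℕ}
    (P : ℝ → Matrix (Fin n) (Fin n) ℝ) (q : ℝ → Fin n → Fin m → ℝ)
    (j : Fin m) (w : Fin n → ℝ) (hw : ∀ i, 0 ≤ w i)
    (T : Set ℝ) (hT : Convex ℝ T)
    (hPnonneg : ∀ u ∈ T, ∀ i k, 0 ≤ P u i k)
    (hqnonneg : ∀ u ∈ T, ∀ i l, 0 ≤ q u i l)
    (hrow : ∀ u ∈ T, ∀ i, (∑ k, P u i k) + (∑ l, q u i l) = 1)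
    (hspec : ∀ u ∈ T, ∀ μ ∈ spectrum ℂ ((P u).map (algebraMap ℝ ℂ)), ‖μ‖ < 1)
    (hqj_diff : ∀ i, ContDiffOn ℝ 2 (fun u => q u i j) T)
    (hqj_mono : ∀ i, MonotoneOn (fun u => q u i j) T)
    (hqj_ccv : ∀ i, ConcaveOn ℝ T (fun u => q u i j))
    (hp_diff : ∀ i k, ContDiffOn ℝ 2 (fun u => P u i k) T)
    (hp_anti : ∀ i k, AntitoneOn (fun u => P u i k) T)
    (hp_cvx : ∀ i k, ConvexOn ℝ T (fun u => P u i k))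
    (hql_diff : ∀ i, ∀ l ≠ j, ContDiffOn ℝ 2 (fun u => q u i l) T)
    (hql_anti : ∀ i, ∀ l ≠ j, AntitoneOn (fun u => q u i l) T)
    (hql_cvx : ∀ i, ∀ l ≠ j, ConvexOn ℝ T (fun u => q u i l)) :
    ConcaveOn ℝ T (fun u => w ⬝ᵥ ((1 - P u)⁻¹ *ᵥ fun i => q u i j)) ∧
      ∀ l ≠ j, ConvexOn ℝ T (fun u => w ⬝ᵥ ((1 - P u)⁻¹ *ᵥ fun i => q u i l)) :=
  choice_share_concave_in_parameter_general P q j w hw T hT hPnonneg hqnonneg hrow hspec hp_anti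
    hp_cvx hql_anti hql_cvx
end
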